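/- arXiv:2106.03824 — 2 statements merged into one kernel-verified Lean document; each statement's English description precedes it below -/
import Mathlib

section
/- Let G be a finite simple graph and k > 0 a real number, and let V_{≤k} = {v : k(v) ≤ k} be the set of vertices of coreness at most k. Then: (a) the sum over v ∈ V_{≤k} of deg_G(v) is at most 2k·|V_{≤k}|; and (b) for every ε > 0, the number of vertices v ∈ V_{≤k} with deg_G(v) > (2+ε)k is at most (2/(2+ε))·|V_{≤k}|. -/
open scoped Classical

set_option linter.unusedSectionVars false

/-- The coreness of `v`: the largest `k` such that `v` belongs to an (induced) subgraph of `G`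
of minimum degree at least `k`. -/
noncomputable def coreness {V : Type} [Fintype V] [DecidableEq V] (G : SimpleGraph V)
    [DecidableRel G.Adj] (v : V) : ℕ :=
  sSup {k : ℕ | ∃ s : Finset V, v ∈ s ∧ ∀ u ∈ s, k ≤ (s.filter (G.Adj u)).card}

section Aux
variable {V : Type} [Fintype V] [DecidableEq V] (G : SimpleGraph V) [DecidableRel G.Adj]

lemma coreness_bddAbove (v : V) :
    BddAbove {k : ℕ | ∃ s : Finset V, v ∈ s ∧ ∀ u ∈ s, k ≤ (s.filter (G.Adj u)).card} := by
  refine ⟨Fintype.card V, fun m hm => ?_⟩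
  obtain ⟨s, hv, hs⟩ := hm
  exact (hs v hv).trans ((Finset.card_filter_le _ _).trans (Finset.card_le_univ s))

lemma le_coreness {v : V} {m : ℕ} (s : Finset V) (hv : v ∈ s)
    (hs : ∀ u ∈ s, m ≤ (s.filter (G.Adj u)).card) : m ≤ coreness G v :=
  le_csSup (coreness_bddAbove G v) ⟨s, hv, hs⟩

lemma coreness_spec (v : V) :
    ∃ s : Finset V, v ∈ s ∧ ∀ u ∈ s, coreness G v ≤ (s.filter (G.Adj u)).card := by
  have hne : {k : ℕ | ∃ s : Finset V, v ∈ s ∧ ∀ u ∈ s, k ≤ (s.filter (G.Adj u)).card}.Nonempty :=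
    ⟨0, {v}, Finset.mem_singleton_self v, fun u _ => Nat.zero_le _⟩
  exact Nat.sSup_mem hne (coreness_bddAbove G v)

lemma core_min_degree (c : ℕ) :
    ∀ u ∈ Finset.univ.filter (fun v => c + 1 ≤ coreness G v),
      c + 1 ≤ ((Finset.univ.filter (fun v => c + 1 ≤ coreness G v)).filter (G.Adj u)).card := by
  intro u hu
  rw [Finset.mem_filter] at hu
  obtain ⟨s, hus, hs⟩ := coreness_spec G u
  have hsub : s ⊆ Finset.univ.filter (fun v => c + 1 ≤ coreness G v) := by
    intro w hw
    simp only [Finset.mem_filter, Finset.mem_univ, true_and]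
    exact le_coreness G s hw fun u' hu' => hu.2.trans (hs u' hu')
  calc c + 1 ≤ (s.filter (G.Adj u)).card := hu.2.trans (hs u hus)
    _ ≤ _ := Finset.card_le_card (Finset.filter_subset_filter _ hsub)

lemma sum_deg_bound (c : ℕ) : ∀ A : Finset V, (∀ v ∈ A, coreness G v ≤ c) →
    ∑ v ∈ A, ((A ∪ Finset.univ.filter (fun w => c + 1 ≤ coreness G w)).filter (G.Adj v)).card
      ≤ 2 * c * A.card := by
  intro A
  induction A using Finset.strongInductionOn with
  | _ A ih =>
  intro hA
  set Core := Finset.univ.filter (fun w => c + 1 ≤ coreness G w) with hCore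
  rcases A.eq_empty_or_nonempty with rfl | ⟨v₁, hv₁⟩
  · simp
  -- find a vertex of small degree in A ∪ Core
  have hlow : ∃ v₀ ∈ A, ((A ∪ Core).filter (G.Adj v₀)).card ≤ c := by
    by_contra h
    push_neg at h
    have hwit : ∀ u ∈ A ∪ Core, c + 1 ≤ ((A ∪ Core).filter (G.Adj u)).card := by
      intro u hu
      rcases Finset.mem_union.mp hu with hu | hu
      · exact h u hu
      · exact (core_min_degree G c u hu).trans
          (Finset.card_le_card (Finset.filter_subset_filter _ Finset.subset_union_right))
    have : c + 1 ≤ coreness G v₁ :=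
      le_coreness G _ (Finset.mem_union_left _ hv₁) hwit
    exact absurd (hA v₁ hv₁) (by omega)
  obtain ⟨v₀, hv₀, hdeg⟩ := hlow
  set A' := A.erase v₀ with hA'
  have hv₀nA' : v₀ ∉ A' := Finset.notMem_erase _ _
  have hv₀nCore : v₀ ∉ Core := by
    simp only [hCore, Finset.mem_filter, Finset.mem_univ, true_and]
    have := hA v₀ hv₀
    omega
  have hins : A = insert v₀ A' := (Finset.insert_erase hv₀).symm
  have hcard : A.card = A'.card + 1 := by
    rw [hins]; exact Finset.card_insert_of_notMem hv₀nA'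
  have hUnion : A ∪ Core = insert v₀ (A' ∪ Core) := by
    rw [hins, Finset.insert_union]
  have hsubset : A' ⊂ A := Finset.erase_ssubset hv₀
  have hterm : ∀ v ∈ A', ((A ∪ Core).filter (G.Adj v)).card ≤
      ((A' ∪ Core).filter (G.Adj v)).card + (if G.Adj v v₀ then 1 else 0) := by
    intro v hv
    rw [hUnion, Finset.filter_insert]
    split
    · exact (Finset.card_insert_le _ _).trans (by omega)
    · omega
  have hsum' : ∑ v ∈ A', (if G.Adj v v₀ then 1 else 0) ≤ c := by
    have : ∑ v ∈ A', (if G.Adj v v₀ then 1 else 0) = (A'.filter (fun v => G.Adj v v₀)).card :=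
      (Finset.card_filter _ _).symm
    rw [this]
    calc (A'.filter (fun v => G.Adj v v₀)).card
        ≤ ((A ∪ Core).filter (G.Adj v₀)).card := by
          apply Finset.card_le_card
          intro w hw
          rw [Finset.mem_filter] at hw ⊢
          exact ⟨Finset.mem_union_left _ (Finset.mem_of_mem_erase hw.1), hw.2.symm⟩
      _ ≤ c := hdeg
  have hih := ih A' hsubset (fun v hv => hA v (Finset.mem_of_mem_erase hv))
  calc ∑ v ∈ A, ((A ∪ Core).filter (G.Adj v)).card
      = ((A ∪ Core).filter (G.Adj v₀)).card
        + ∑ v ∈ A', ((A ∪ Core).filter (G.Adj v)).card := by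
        rw [hins, Finset.sum_insert hv₀nA']
    _ ≤ c + ∑ v ∈ A', (((A' ∪ Core).filter (G.Adj v)).card + (if G.Adj v v₀ then 1 else 0)) := by
        gcongr with v hv
        exact hterm v hv
    _ = c + (∑ v ∈ A', ((A' ∪ Core).filter (G.Adj v)).card
        + ∑ v ∈ A', (if G.Adj v v₀ then 1 else 0)) := by rw [Finset.sum_add_distrib]
    _ ≤ c + (2 * c * A'.card + c) := by gcongr
    _ ≤ 2 * c * A.card := by rw [hcard]; ring_nf; omega

end Aux

/-- For `k > 0`, let `V_{≤k}` be the set of vertices of coreness at most `k`.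
(a) The sum of the `G`-degrees of the vertices of `V_{≤k}` is at most `2k·|V_{≤k}|`.
(b) For every `ε > 0`, at most `(2/(2+ε))·|V_{≤k}|` vertices of `V_{≤k}` have degree
exceeding `(2+ε)k`. -/
theorem low_coreness_degree_sum_bound
    {V : Type} [Fintype V] [DecidableEq V] (G : SimpleGraph V) [DecidableRel G.Adj]
    (k : ℝ) (hk : 0 < k) :
    (∑ v ∈ Finset.univ.filter (fun v : V => (coreness G v : ℝ) ≤ k), (G.degree v : ℝ)) ≤
        2 * k * (Finset.univ.filter (fun v : V => (coreness G v : ℝ) ≤ k)).card ∧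
    ∀ ε : ℝ, 0 < ε →
      ((Finset.univ.filter
          (fun v : V => (coreness G v : ℝ) ≤ k ∧ (2 + ε) * k < (G.degree v : ℝ))).card : ℝ) ≤
        2 / (2 + ε) * (Finset.univ.filter (fun v : V => (coreness G v : ℝ) ≤ k)).card := by
  classical
  set c := ⌊k⌋₊ with hc
  set S := Finset.univ.filter (fun v : V => (coreness G v : ℝ) ≤ k) with hSdef
  set Core := Finset.univ.filter (fun w : V => c + 1 ≤ coreness G w) with hCore
  have hmemS : ∀ v : V, v ∈ S ↔ coreness G v ≤ c := by
    intro v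
    simp only [hSdef, Finset.mem_filter, Finset.mem_univ, true_and, hc]
    exact (Nat.le_floor_iff hk.le).symm
  have hSC : S ∪ Core = Finset.univ := by
    ext v
    simp only [Finset.mem_union, Finset.mem_univ, iff_true, hmemS v, hCore,
      Finset.mem_filter, Finset.mem_univ, true_and]
    omega
  have hdegEq : ∀ v : V, G.degree v = ((S ∪ Core).filter (G.Adj v)).card := by
    intro v
    rw [hSC, ← SimpleGraph.neighborFinset_eq_filter]
    rfl
  have hkeyN : ∑ v ∈ S, G.degree v ≤ 2 * c * S.card := by
    calc ∑ v ∈ S, G.degree v = ∑ v ∈ S, ((S ∪ Core).filter (G.Adj v)).card :=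
          Finset.sum_congr rfl fun v _ => hdegEq v
      _ ≤ 2 * c * S.card := sum_deg_bound G c S (fun v hv => (hmemS v).mp hv)
  have hcR : (c : ℝ) ≤ k := Nat.floor_le hk.le
  have parta : (∑ v ∈ S, (G.degree v : ℝ)) ≤ 2 * k * S.card := by
    calc (∑ v ∈ S, (G.degree v : ℝ)) = ((∑ v ∈ S, G.degree v : ℕ) : ℝ) := by push_cast; ring
      _ ≤ ((2 * c * S.card : ℕ) : ℝ) := by exact_mod_cast hkeyN
      _ = 2 * (c : ℝ) * S.card := by push_cast; ring
      _ ≤ 2 * k * S.card := by gcongr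
  refine ⟨parta, fun ε hε => ?_⟩
  set B := Finset.univ.filter
      (fun v : V => (coreness G v : ℝ) ≤ k ∧ (2 + ε) * k < (G.degree v : ℝ)) with hB
  have hBsub : B ⊆ S := by
    intro v hv
    simp only [hB, Finset.mem_filter, Finset.mem_univ, true_and] at hv
    simp only [hSdef, Finset.mem_filter, Finset.mem_univ, true_and]
    exact hv.1
  have h1 : (2 + ε) * k * (B.card : ℝ) ≤ ∑ v ∈ S, (G.degree v : ℝ) := by
    calc (2 + ε) * k * (B.card : ℝ) = ∑ _v ∈ B, (2 + ε) * k := by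
          rw [Finset.sum_const, nsmul_eq_mul]; ring
      _ ≤ ∑ v ∈ B, (G.degree v : ℝ) := by
          apply Finset.sum_le_sum
          intro v hv
          simp only [hB, Finset.mem_filter, Finset.mem_univ, true_and] at hv
          exact hv.2.le
      _ ≤ ∑ v ∈ S, (G.degree v : ℝ) :=
          Finset.sum_le_sum_of_subset_of_nonneg hBsub (fun v _ _ => by positivity)
  have h2 : (2 + ε) * k * (B.card : ℝ) ≤ 2 * k * S.card := h1.trans parta
  have h2ε : (0 : ℝ) < 2 + ε := by linarith
  rw [div_mul_eq_mul_div, le_div_iff₀ h2ε]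
  nlinarith [h2, hk, Nat.cast_nonneg (α := ℝ) B.card, Nat.cast_nonneg (α := ℝ) S.card]
end

section
/- Let G, δ, λ, K, L, gn, ℓ be as in the parallel level data structure setting, with ℓ satisfying Invariant 1 and Invariant 2, and assume L ≥ log_{(2+3/λ)(1+δ)/2}(4m+1). Assign to each level l lying in group i a palette P_l of ⌈2(2+3/λ)(1+δ)^i⌉ colors, where the palettes of distinct levels are pairwise disjoint. Then: (a) G admits a proper vertex coloring in which every vertex v receives a color from P_{ℓ(v)}; and (b) the total number of colors in the palettes of all levels that contain at least one vertex is at most C·(d+1)·⌈log_{1+δ} n⌉ for some constant C depending only on δ and λ, where d is the degeneracy of G (so G is properly colorable with O(α log n) colors, where α is the arboricity of G). -/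
/-- The number of neighbors `w` of `v` whose level is at least `l` ("up-degree" at level `l`). -/
def upDeg {V : Type} [Fintype V] [DecidableEq V] (G : SimpleGraph V) [DecidableRel G.Adj]
    (ℓ : V → ℕ) (v : V) (l : ℕ) : ℕ :=
  ((G.neighborFinset v).filter (fun w => l ≤ ℓ w)).card

/-- Invariant 1 (degree upper bound): every vertex `v` has at most
`(2 + 3/λ)(1+δ)^{gn(ℓ(v))}` neighbors at level `≥ ℓ(v)`, where `gn(l) = ⌊l / L⌋`. -/
def Invariant1 {V : Type} [Fintype V] [DecidableEq V] (G : SimpleGraph V) [DecidableRel G.Adj]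
    (δ lam : ℝ) (L : ℕ) (ℓ : V → ℕ) : Prop :=
  ∀ v : V, (upDeg G ℓ v (ℓ v) : ℝ) ≤ (2 + 3 / lam) * (1 + δ) ^ (ℓ v / L)

/-- Invariant 2 (degree lower bound): every vertex `v` with `ℓ(v) > 0` has at least
`(1+δ)^{gn(ℓ(v)-1)}` neighbors at level `≥ ℓ(v) - 1`. -/
def Invariant2 {V : Type} [Fintype V] [DecidableEq V] (G : SimpleGraph V) [DecidableRel G.Adj]
    (δ : ℝ) (L : ℕ) (ℓ : V → ℕ) : Prop :=
  ∀ v : V, 0 < ℓ v → (1 + δ) ^ ((ℓ v - 1) / L) ≤ (upDeg G ℓ v (ℓ v - 1) : ℝ)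

/-- The coreness estimate `ĉ(v) = (1+δ)^{max(⌊(ℓ(v)+1)/L⌋ - 1, 0)}`
(natural-number division and truncated subtraction). -/
def corenessEstimate {V : Type} (δ : ℝ) (L : ℕ) (ℓ : V → ℕ) (v : V) : ℝ :=
  (1 + δ) ^ ((ℓ v + 1) / L - 1)

/-- The degeneracy of `G`: the maximum coreness of a vertex. -/
noncomputable def degeneracy {V : Type} [Fintype V] [DecidableEq V] (G : SimpleGraph V)
    [DecidableRel G.Adj] : ℕ :=
  Finset.univ.sup (coreness G)

/-! ### Auxiliary lemmas -/

/-- Greedy coloring: if every vertex has fewer same-level neighbors than its palette size,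
a coloring respecting palettes exists (proper on same-level adjacent pairs). -/
lemma greedy_aux {V : Type} [Fintype V] [DecidableEq V] (G : SimpleGraph V) [DecidableRel G.Adj]
    (ℓ : V → ℕ) (P : ℕ → ℕ)
    (h : ∀ v, ((G.neighborFinset v).filter (fun w => ℓ w = ℓ v)).card + 1 ≤ P (ℓ v)) :
    ∀ s : Finset V, ∃ col : V → ℕ, (∀ v, col v < P (ℓ v)) ∧
      ∀ u v, u ∈ s → v ∈ s → G.Adj u v → ℓ u = ℓ v → col u ≠ col v := by
  intro s
  induction s using Finset.strongInduction with
  | _ s ih =>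
    rcases s.eq_empty_or_nonempty with rfl | hs
    · exact ⟨fun _ => 0, fun v => lt_of_lt_of_le (Nat.succ_le_succ (Nat.zero_le _)) (h v),
        by simp⟩
    obtain ⟨u, hu⟩ := hs
    obtain ⟨col, hcol, hprop⟩ := ih (s.erase u) (Finset.erase_ssubset hu)
    set N : Finset V := (G.neighborFinset u).filter (fun w => ℓ w = ℓ u) with hN
    have hcard : (N.image col).card < (Finset.range (P (ℓ u))).card := by
      rw [Finset.card_range]
      exact lt_of_le_of_lt (Finset.card_image_le) (h u)
    have hns : ¬ (Finset.range (P (ℓ u)) ⊆ N.image col) := fun hsub =>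
      absurd (Finset.card_le_card hsub) (not_le.mpr hcard)
    obtain ⟨c, hc, hcn⟩ := Finset.not_subset.mp hns
    refine ⟨Function.update col u c, ?_, ?_⟩
    · intro v
      rcases eq_or_ne v u with rfl | hv
      · simpa using Finset.mem_range.mp hc
      · rw [Function.update_of_ne hv]; exact hcol v
    · intro x y hx hy hadj hlev
      have hxy : x ≠ y := G.ne_of_adj hadj
      rcases eq_or_ne x u with rfl | hxu
      · rw [Function.update_self, Function.update_of_ne (Ne.symm hxy)]
        intro hcy
        exact hcn (Finset.mem_image.mpr ⟨y, Finset.mem_filter.mpr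
          ⟨(G.mem_neighborFinset x y).mpr hadj, hlev.symm⟩, hcy.symm⟩)
      rcases eq_or_ne y u with rfl | hyu
      · rw [Function.update_self, Function.update_of_ne hxy]
        intro hcy
        exact hcn (Finset.mem_image.mpr ⟨x, Finset.mem_filter.mpr
          ⟨(G.mem_neighborFinset y x).mpr hadj.symm, hlev⟩, hcy⟩)
      · rw [Function.update_of_ne hxu, Function.update_of_ne hyu]
        exact hprop x y (Finset.mem_erase.mpr ⟨hxu, hx⟩) (Finset.mem_erase.mpr ⟨hyu, hy⟩)
          hadj hlev

lemma coreness_ge {V : Type} [Fintype V] [DecidableEq V] (G : SimpleGraph V)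
    [DecidableRel G.Adj] (v : V) (k : ℕ) (s : Finset V) (hv : v ∈ s)
    (hmin : ∀ u ∈ s, k ≤ (s.filter (G.Adj u)).card) : k ≤ coreness G v := by
  apply le_csSup
  · refine ⟨Fintype.card V, fun j hj => ?_⟩
    obtain ⟨t, hvt, ht⟩ := hj
    exact le_trans (ht v hvt) (le_trans (Finset.card_filter_le _ _) (Finset.card_le_univ t))
  · exact ⟨s, hv, hmin⟩

lemma exists_low_deg {V : Type} [Fintype V] [DecidableEq V] (G : SimpleGraph V)
    [DecidableRel G.Adj] (s : Finset V) (hs : s.Nonempty) :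
    ∃ u ∈ s, (s.filter (G.Adj u)).card ≤ degeneracy G := by
  by_contra hcon
  push_neg at hcon
  obtain ⟨u, hu⟩ := hs
  have h1 : degeneracy G + 1 ≤ coreness G u :=
    coreness_ge G u _ s hu (fun w hw => hcon w hw)
  have h2 : coreness G u ≤ degeneracy G := Finset.le_sup (Finset.mem_univ u)
  omega

/-- Edge-count bound: the sum of degrees within any vertex set is at most `2·d·|s|`. -/
lemma sum_deg_le {V : Type} [Fintype V] [DecidableEq V] (G : SimpleGraph V)
    [DecidableRel G.Adj] (s : Finset V) :
    ∑ u ∈ s, (s.filter (G.Adj u)).card ≤ 2 * degeneracy G * s.card := by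
  induction s using Finset.strongInduction with
  | _ s ih =>
    rcases s.eq_empty_or_nonempty with rfl | hs
    · simp
    obtain ⟨u, hu, hd⟩ := exists_low_deg G s hs
    set s' := s.erase u with hs'
    have hins : s = insert u s' := (Finset.insert_erase hu).symm
    have hus' : u ∉ s' := Finset.notMem_erase u s
    have hfilt : ∀ w, (s.filter (G.Adj w)).card
        = (s'.filter (G.Adj w)).card + (if G.Adj w u then 1 else 0) := by
      intro w
      rw [hins, Finset.filter_insert]
      split
      · rw [Finset.card_insert_of_notMem (fun hmem => hus' (Finset.mem_of_mem_filter u hmem))]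
      · rw [Nat.add_zero]
    have hdegu : (s.filter (G.Adj u)).card = (s'.filter (G.Adj u)).card := by
      rw [hfilt u, if_neg (G.irrefl), Nat.add_zero]
    have hcount : (s'.filter (fun w => G.Adj w u)).card = (s'.filter (G.Adj u)).card := by
      congr 1
      apply Finset.filter_congr
      intro x _
      simp [G.adj_comm]
    have key : ∑ w ∈ s, (s.filter (G.Adj w)).card
        = ∑ w ∈ s', (s'.filter (G.Adj w)).card + 2 * (s'.filter (G.Adj u)).card := by
      rw [hins, Finset.sum_insert hus', ← hins, hdegu]
      have : ∑ w ∈ s', (s.filter (G.Adj w)).card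
          = ∑ w ∈ s', ((s'.filter (G.Adj w)).card + if G.Adj w u then 1 else 0) :=
        Finset.sum_congr rfl (fun w _ => hfilt w)
      rw [this, Finset.sum_add_distrib]
      have hsum : (∑ x ∈ s', if G.Adj x u then 1 else 0)
          = (s'.filter (fun w => G.Adj w u)).card := (Finset.card_filter _ _).symm
      rw [hsum, hcount]
      ring
    have hcard : s.card = s'.card + 1 := by
      rw [hins, Finset.card_insert_of_notMem hus']
    have ihs := ih s' (Finset.erase_ssubset hu)
    rw [key, hcard]
    have : (s'.filter (G.Adj u)).card ≤ degeneracy G := hdegu ▸ hd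
    nlinarith [this, ihs]

/-- One step of the level-set size chain, from Invariant 2 and the degree-sum bound. -/
lemma chain_step {V : Type} [Fintype V] [DecidableEq V] (G : SimpleGraph V)
    [DecidableRel G.Adj] (δ : ℝ) (hδ : 0 < δ) (L : ℕ) (ℓ : V → ℕ)
    (h2 : Invariant2 G δ L ℓ) (j : ℕ) (hj : 1 ≤ j) :
    ((Finset.univ.filter (fun v => j ≤ ℓ v)).card : ℝ) * (1 + δ) ^ ((j - 1) / L)
      ≤ 2 * degeneracy G * ((Finset.univ.filter (fun v => j - 1 ≤ ℓ v)).card : ℝ) := by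
  classical
  set A : Finset V := Finset.univ.filter (fun v => j - 1 ≤ ℓ v) with hA
  set Aj : Finset V := Finset.univ.filter (fun v => j ≤ ℓ v) with hAj
  have hsub : Aj ⊆ A := by
    intro v hv
    simp only [hA, hAj, Finset.mem_filter, Finset.mem_univ, true_and] at *
    omega
  have hper : ∀ u ∈ Aj, (1 + δ) ^ ((j - 1) / L) ≤ ((A.filter (G.Adj u)).card : ℝ) := by
    intro u hu
    have hju : j ≤ ℓ u := by
      simpa only [hAj, Finset.mem_filter, Finset.mem_univ, true_and] using hu
    have hpos : 0 < ℓ u := lt_of_lt_of_le hj hju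
    have e1 : A.filter (G.Adj u) = (G.neighborFinset u).filter (fun w => j - 1 ≤ ℓ w) := by
      ext w
      simp only [hA, Finset.mem_filter, Finset.mem_univ, true_and,
        SimpleGraph.mem_neighborFinset]
      tauto
    have e2 : (A.filter (G.Adj u)).card = upDeg G ℓ u (j - 1) := by rw [e1]; rfl
    have mono : upDeg G ℓ u (ℓ u - 1) ≤ upDeg G ℓ u (j - 1) := by
      apply Finset.card_le_card
      intro w hw
      simp only [Finset.mem_filter] at hw ⊢
      exact ⟨hw.1, by omega⟩
    have hinv := h2 u hpos
    have hpow : (1 + δ) ^ ((j - 1) / L) ≤ (1 + δ) ^ ((ℓ u - 1) / L) := by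
      apply pow_le_pow_right₀ (by linarith)
      exact Nat.div_le_div_right (by omega)
    rw [e2]
    calc (1 + δ) ^ ((j - 1) / L) ≤ (1 + δ) ^ ((ℓ u - 1) / L) := hpow
      _ ≤ (upDeg G ℓ u (ℓ u - 1) : ℝ) := hinv
      _ ≤ (upDeg G ℓ u (j - 1) : ℝ) := by exact_mod_cast mono
  have hs1 : (Aj.card : ℝ) * (1 + δ) ^ ((j - 1) / L)
      ≤ ∑ u ∈ Aj, ((A.filter (G.Adj u)).card : ℝ) := by
    have : (Aj.card : ℝ) * (1 + δ) ^ ((j - 1) / L)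
        = ∑ _u ∈ Aj, (1 + δ) ^ ((j - 1) / L) := by
      rw [Finset.sum_const, nsmul_eq_mul]
    rw [this]
    exact Finset.sum_le_sum hper
  have hs2 : ∑ u ∈ Aj, ((A.filter (G.Adj u)).card : ℝ)
      ≤ ∑ u ∈ A, ((A.filter (G.Adj u)).card : ℝ) :=
    Finset.sum_le_sum_of_subset_of_nonneg hsub (fun _ _ _ => by positivity)
  have hs3 : ∑ u ∈ A, ((A.filter (G.Adj u)).card : ℝ)
      ≤ 2 * degeneracy G * (A.card : ℝ) := by
    have := sum_deg_le G A
    exact_mod_cast this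
  calc (Aj.card : ℝ) * (1 + δ) ^ ((j - 1) / L)
      ≤ ∑ u ∈ Aj, ((A.filter (G.Adj u)).card : ℝ) := hs1
    _ ≤ ∑ u ∈ A, ((A.filter (G.Adj u)).card : ℝ) := hs2
    _ ≤ 2 * degeneracy G * (A.card : ℝ) := hs3

/-- The group of any occupied level is small: `(1+δ)^{ℓ(v)/L} = O(d)`. -/
lemma group_bound {V : Type} [Fintype V] [DecidableEq V] (G : SimpleGraph V)
    [DecidableRel G.Adj] (δ : ℝ) (hδ : 0 < δ) (L c : ℕ) (hc : 1 ≤ c) (hLc : L = 4 * c)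
    (hn2 : 2 ≤ Fintype.card V) (hcn : (Fintype.card V : ℝ) ≤ (1 + δ) ^ c)
    (ℓ : V → ℕ) (h2 : Invariant2 G δ L ℓ) (hd1 : 1 ≤ degeneracy G) (v0 : V) :
    (1 + δ) ^ (ℓ v0 / L) ≤ 2 * (1 + δ) ^ 2 * ((degeneracy G : ℝ) + 1) := by
  classical
  set d : ℕ := degeneracy G with hd
  set g : ℕ := ℓ v0 / L with hg
  have hdpos : (0 : ℝ) < d := by exact_mod_cast hd1
  have h1δ : (1 : ℝ) ≤ 1 + δ := by linarith
  rcases Nat.eq_zero_or_pos g with hg0 | hg1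
  · rw [hg0, pow_zero]
    nlinarith [sq_nonneg δ, hdpos]
  have hL : 0 < L := by omega
  set ρ : ℝ := (1 + δ) ^ (g - 1) / (2 * d) with hρ
  have hρ0 : 0 ≤ ρ := by positivity
  have tel : ∀ k, k ≤ L → ρ ^ k ≤ ((Finset.univ.filter (fun v => g * L - k ≤ ℓ v)).card : ℝ) := by
    intro k
    induction k with
    | zero =>
      intro _
      have hv0 : v0 ∈ Finset.univ.filter (fun v => g * L - 0 ≤ ℓ v) := by
        simp only [Finset.mem_filter, Finset.mem_univ, true_and, Nat.sub_zero]
        rw [hg]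
        exact Nat.div_mul_le_self (ℓ v0) L
      have : 1 ≤ (Finset.univ.filter (fun v => g * L - 0 ≤ ℓ v)).card :=
        Finset.card_pos.mpr ⟨v0, hv0⟩
      rw [pow_zero]
      exact_mod_cast this
    | succ k ih =>
      intro hkL
      have hk : k ≤ L := Nat.le_of_succ_le hkL
      set j : ℕ := g * L - k with hj
      have hj1 : 1 ≤ j := by
        have : L ≤ g * L := Nat.le_mul_of_pos_left L hg1
        omega
      have hjm : j - 1 = g * L - (k + 1) := by omega
      have hgl : (g - 1) ≤ (j - 1) / L := by
        have hmul : (g - 1) * L = g * L - L := by rw [Nat.sub_mul, one_mul]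
        have hLgL : L ≤ g * L := Nat.le_mul_of_pos_left L hg1
        rw [Nat.le_div_iff_mul_le hL, hmul]
        omega
      have hpow2 : (1 + δ) ^ (g - 1) ≤ (1 + δ) ^ ((j - 1) / L) :=
        pow_le_pow_right₀ h1δ hgl
      have hstep := chain_step G δ hδ L ℓ h2 j hj1
      have hcard : ρ * (((Finset.univ.filter (fun v => j ≤ ℓ v)).card : ℝ))
          ≤ ((Finset.univ.filter (fun v => j - 1 ≤ ℓ v)).card : ℝ) := by
        rw [hρ, div_mul_eq_mul_div, div_le_iff₀ (by positivity)]
        calc (1 + δ) ^ (g - 1) * ((Finset.univ.filter (fun v => j ≤ ℓ v)).card : ℝ)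
            ≤ (1 + δ) ^ ((j - 1) / L) * ((Finset.univ.filter (fun v => j ≤ ℓ v)).card : ℝ) := by
              apply mul_le_mul_of_nonneg_right hpow2 (by positivity)
          _ ≤ 2 * d * ((Finset.univ.filter (fun v => j - 1 ≤ ℓ v)).card : ℝ) := by
              rw [mul_comm]; exact hstep
          _ = ((Finset.univ.filter (fun v => j - 1 ≤ ℓ v)).card : ℝ) * (2 * d) := by ring
      calc ρ ^ (k + 1) = ρ * ρ ^ k := by ring
        _ ≤ ρ * ((Finset.univ.filter (fun v => j ≤ ℓ v)).card : ℝ) :=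
            mul_le_mul_of_nonneg_left (ih hk) hρ0
        _ ≤ ((Finset.univ.filter (fun v => j - 1 ≤ ℓ v)).card : ℝ) := hcard
        _ = ((Finset.univ.filter (fun v => g * L - (k + 1) ≤ ℓ v)).card : ℝ) := by rw [hjm]
  have htel := tel L le_rfl
  have hcardn : ((Finset.univ.filter (fun v => g * L - L ≤ ℓ v)).card : ℝ) ≤ Fintype.card V := by
    exact_mod_cast Finset.card_le_univ _
  have hρL : ρ ^ L ≤ (Fintype.card V : ℝ) := le_trans htel hcardn
  have hρlt : ρ < 1 + δ := by
    by_contra hcon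
    push_neg at hcon
    have h1 : (1 + δ) ^ L ≤ ρ ^ L := pow_le_pow_left₀ (by linarith) hcon L
    have hn1 : (1 : ℝ) ≤ Fintype.card V := by exact_mod_cast le_trans (by norm_num) hn2
    have h2' : ((Fintype.card V : ℝ)) ^ 4 ≤ ((1 + δ) ^ c) ^ 4 :=
      pow_le_pow_left₀ (by linarith) hcn 4
    have h3 : ((1 + δ) ^ c) ^ 4 = (1 + δ) ^ L := by
      rw [← pow_mul, hLc]; ring_nf
    have h4 : ((Fintype.card V : ℝ)) ^ 4 ≤ (Fintype.card V : ℝ) := by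
      calc ((Fintype.card V : ℝ)) ^ 4 ≤ ((1 + δ) ^ c) ^ 4 := h2'
        _ = (1 + δ) ^ L := h3
        _ ≤ ρ ^ L := h1
        _ ≤ (Fintype.card V : ℝ) := hρL
    have hn2' : (2 : ℝ) ≤ Fintype.card V := by exact_mod_cast hn2
    have hlt : (Fintype.card V : ℝ) < ((Fintype.card V : ℝ)) ^ 4 := by
      nth_rewrite 1 [← pow_one ((Fintype.card V : ℝ))]
      exact pow_lt_pow_right₀ (by linarith) (by norm_num)
    linarith
  have hfin : (1 + δ) ^ (g - 1) < (1 + δ) * (2 * d) := by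
    rw [hρ, div_lt_iff₀ (by positivity)] at hρlt
    linarith
  have hgsplit : (1 + δ) ^ g = (1 + δ) ^ (g - 1) * (1 + δ) := by
    rw [← pow_succ]
    congr 1
    omega
  rw [hgsplit]
  have hδ0 : (0:ℝ) < 1 + δ := by linarith
  nlinarith [hfin, hδ0, hdpos]

/-- Summing a function of the group number over `N` full groups of levels. -/
lemma sum_levels (f : ℕ → ℝ) (L : ℕ) (hL : 0 < L) :
    ∀ N : ℕ, ∑ l ∈ Finset.range (N * L), f (l / L) = L * ∑ i ∈ Finset.range N, f i := by
  intro N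
  induction N with
  | zero => simp
  | succ N ih =>
    have h1 : N * L ≤ (N + 1) * L := Nat.mul_le_mul_right L (Nat.le_succ N)
    rw [Finset.range_eq_Ico, ← Finset.sum_Ico_consecutive _ (Nat.zero_le (N * L)) h1,
      ← Finset.range_eq_Ico, ih]
    have h2 : ∑ l ∈ Finset.Ico (N * L) ((N + 1) * L), f (l / L)
        = ∑ _l ∈ Finset.Ico (N * L) ((N + 1) * L), f N := by
      apply Finset.sum_congr rfl
      intro l hl
      rw [Finset.mem_Ico] at hl
      congr 1
      exact Nat.div_eq_of_lt_le hl.1 (by simpa [Nat.succ_mul] using hl.2)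
    rw [h2, Finset.sum_const, Nat.card_Ico, nsmul_eq_mul, Finset.sum_range_succ]
    have h3 : (N + 1) * L - N * L = L := by ring_nf; omega
    rw [h3]
    ring

set_option maxHeartbeats 1000000 in
/-- In the parallel level data structure setting (both invariants, group
size `L ≥ log_{(2+3/λ)(1+δ)/2}(4m+1)`), give each level `l` in group `i` a palette of
`⌈2(2+3/λ)(1+δ)^i⌉` colors, palettes of distinct levels disjoint (modelled as pairs
`(l, c)` with `c` below the palette size).  Then (a) `G` has a proper coloring in which every
vertex gets a color of its own level's palette, and (b) the total palette size over all levels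
containing a vertex is at most `C·(d+1)·⌈log_{1+δ} n⌉` for a constant `C` depending only on
`δ` and `λ`, where `d` is the degeneracy — an `O(α log n)` coloring. -/
theorem plds_alpha_log_n_coloring (δ lam : ℝ) (hδ : 0 < δ) (hlam : 0 < lam) :
    ∃ C : ℝ, 0 < C ∧
      ∀ (V : Type) [Fintype V] [DecidableEq V] (G : SimpleGraph V) [DecidableRel G.Adj],
        1 ≤ G.edgeFinset.card →
        ∀ (K L : ℕ) (ℓ : V → ℕ), 1 ≤ K →
          L = 4 * ⌈Real.logb (1 + δ) (Fintype.card V)⌉₊ →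
          Real.logb ((2 + 3 / lam) * (1 + δ) / 2) (4 * G.edgeFinset.card + 1) ≤ (L : ℝ) →
          (∀ v, ℓ v < K) →
          Invariant1 G δ lam L ℓ →
          Invariant2 G δ L ℓ →
          (∃ col : V → ℕ,
            (∀ v : V, col v < ⌈2 * (2 + 3 / lam) * (1 + δ) ^ (ℓ v / L)⌉₊) ∧
            (∀ u v : V, G.Adj u v → (ℓ u, col u) ≠ (ℓ v, col v))) ∧
          ((∑ l ∈ Finset.univ.image ℓ, (⌈2 * (2 + 3 / lam) * (1 + δ) ^ (l / L)⌉₊ : ℝ)) ≤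
            C * ((degeneracy G : ℝ) + 1) * ⌈Real.logb (1 + δ) (Fintype.card V)⌉₊) := by
  have h3lam : (0:ℝ) < 3 / lam := div_pos (by norm_num) hlam
  have hU2 : (2:ℝ) < 2 + 3 / lam := by linarith
  have h1δ : (1:ℝ) < 1 + δ := by linarith
  have hδ0 : (0:ℝ) < 1 + δ := by linarith
  set E : ℝ := 2 * (2 + 3 / lam) * (1 + δ) / δ + (1 + 1 / δ) with hE
  have hEpos : 0 < E := by
    have h1 : (0:ℝ) < 2 * (2 + 3 / lam) * (1 + δ) / δ :=
      div_pos (by nlinarith) hδ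
    have h2 : (0:ℝ) < 1 + 1 / δ := by
      have := one_div_pos.mpr hδ
      linarith
    rw [hE]; linarith
  set B : ℝ := 2 * (1 + δ) ^ 2 with hB
  have hBpos : 0 < B := by positivity
  refine ⟨4 * E * B, by positivity, ?_⟩
  intro V _ _ G _ hm K L ℓ hK hLdef _hLlog _hℓK hI1 hI2
  classical
  -- basic consequences of having an edge
  have hadj : ∃ a b : V, G.Adj a b := by
    obtain ⟨e, he⟩ := Finset.card_pos.mp hm
    rw [SimpleGraph.mem_edgeFinset] at he
    revert he
    refine e.ind ?_
    intro x y he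
    exact ⟨x, y, he⟩
  obtain ⟨a, b, hab⟩ := hadj
  have : Nonempty V := ⟨a⟩
  have hn2 : 2 ≤ Fintype.card V := Fintype.one_lt_card_iff.mpr ⟨a, b, hab.ne⟩
  have hd1 : 1 ≤ degeneracy G := by
    have hcore : 1 ≤ coreness G a := by
      apply coreness_ge G a 1 {a, b} (by simp)
      intro u hu
      rcases Finset.mem_insert.mp hu with rfl | hub
      · refine Finset.card_pos.mpr ⟨b, ?_⟩
        simp [hab]
      · rw [Finset.mem_singleton] at hub
        subst hub
        refine Finset.card_pos.mpr ⟨a, ?_⟩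
        simp [hab.symm]
    exact le_trans hcore (Finset.le_sup (Finset.mem_univ a))
  set c : ℕ := ⌈Real.logb (1 + δ) (Fintype.card V)⌉₊ with hcdef
  have hnR : (1:ℝ) < Fintype.card V := by exact_mod_cast hn2
  have hc1 : 1 ≤ c := by
    rw [hcdef]
    exact Nat.ceil_pos.mpr (Real.logb_pos h1δ hnR)
  have hL0 : 0 < L := by omega
  have hcn : (Fintype.card V : ℝ) ≤ (1 + δ) ^ c := by
    have hlogc : Real.logb (1 + δ) (Fintype.card V) ≤ (c:ℝ) := Nat.le_ceil _
    calc (Fintype.card V : ℝ)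
        = (1 + δ) ^ Real.logb (1 + δ) (Fintype.card V) :=
          (Real.rpow_logb hδ0 (ne_of_gt h1δ) (by linarith)).symm
      _ ≤ (1 + δ) ^ (c:ℝ) := (Real.rpow_le_rpow_left_iff h1δ).mpr hlogc
      _ = (1 + δ) ^ c := Real.rpow_natCast _ _
  constructor
  · -- part (a): proper coloring
    set P : ℕ → ℕ := fun l => ⌈2 * (2 + 3 / lam) * (1 + δ) ^ (l / L)⌉₊ with hP
    have hpal : ∀ v, ((G.neighborFinset v).filter (fun w => ℓ w = ℓ v)).card + 1 ≤ P (ℓ v) := by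
      intro v
      have hsub : (G.neighborFinset v).filter (fun w => ℓ w = ℓ v)
          ⊆ (G.neighborFinset v).filter (fun w => ℓ v ≤ ℓ w) := by
        intro w hw
        rw [Finset.mem_filter] at hw ⊢
        exact ⟨hw.1, le_of_eq hw.2.symm⟩
      have hcard : (((G.neighborFinset v).filter (fun w => ℓ w = ℓ v)).card : ℝ)
          ≤ (2 + 3 / lam) * (1 + δ) ^ (ℓ v / L) := by
        refine le_trans ?_ (hI1 v)
        exact_mod_cast Finset.card_le_card hsub
      have hx1 : (1:ℝ) ≤ (1 + δ) ^ (ℓ v / L) := one_le_pow₀ (le_of_lt h1δ)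
      have hreal : (((G.neighborFinset v).filter (fun w => ℓ w = ℓ v)).card : ℝ) + 1
          ≤ 2 * (2 + 3 / lam) * (1 + δ) ^ (ℓ v / L) := by
        nlinarith [hcard, hx1]
      have hceil := Nat.le_ceil (2 * (2 + 3 / lam) * (1 + δ) ^ (ℓ v / L))
      rw [hP]
      exact_mod_cast le_trans hreal hceil
    obtain ⟨col, hcol, hprop⟩ := greedy_aux G ℓ P hpal Finset.univ
    refine ⟨col, hcol, ?_⟩
    intro u v huv heq
    rw [Prod.mk.injEq] at heq
    exact hprop u v (Finset.mem_univ u) (Finset.mem_univ v) huv heq.1 heq.2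
  · -- part (b): total palette size
    set lmax : ℕ := Finset.univ.sup ℓ with hlmax
    obtain ⟨v0, _, hv0⟩ := Finset.exists_mem_eq_sup Finset.univ Finset.univ_nonempty ℓ
    set g : ℕ := lmax / L with hgdef
    have hgb : (1 + δ) ^ g ≤ B * ((degeneracy G : ℝ) + 1) := by
      have := group_bound G δ hδ L c hc1 hLdef hn2 hcn ℓ hI2 hd1 v0
      rw [hgdef, hlmax, hv0, hB]
      exact this
    have himg : Finset.univ.image ℓ ⊆ Finset.range ((g + 1) * L) := by
      intro l hl
      obtain ⟨v, _, rfl⟩ := Finset.mem_image.mp hl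
      rw [Finset.mem_range]
      have h1 : ℓ v ≤ lmax := Finset.le_sup (Finset.mem_univ v)
      have h2 : lmax < (g + 1) * L := (Nat.div_lt_iff_lt_mul hL0).mp (Nat.lt_succ_self g)
      omega
    have hterm_nonneg : ∀ l : ℕ, (0:ℝ) ≤ 2 * (2 + 3 / lam) * (1 + δ) ^ (l / L) := by
      intro l
      have : (0:ℝ) ≤ (1 + δ) ^ (l / L) := by positivity
      nlinarith
    have hstep1 : (∑ l ∈ Finset.univ.image ℓ, (⌈2 * (2 + 3 / lam) * (1 + δ) ^ (l / L)⌉₊ : ℝ))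
        ≤ ∑ l ∈ Finset.range ((g + 1) * L), (⌈2 * (2 + 3 / lam) * (1 + δ) ^ (l / L)⌉₊ : ℝ) :=
      Finset.sum_le_sum_of_subset_of_nonneg himg (fun _ _ _ => by positivity)
    have hstep2 : ∑ l ∈ Finset.range ((g + 1) * L), (⌈2 * (2 + 3 / lam) * (1 + δ) ^ (l / L)⌉₊ : ℝ)
        ≤ ∑ l ∈ Finset.range ((g + 1) * L), (2 * (2 + 3 / lam) * (1 + δ) ^ (l / L) + 1) := by
      apply Finset.sum_le_sum
      intro l _
      exact (Nat.ceil_lt_add_one (hterm_nonneg l)).le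
    have hstep3 : ∑ l ∈ Finset.range ((g + 1) * L), (2 * (2 + 3 / lam) * (1 + δ) ^ (l / L) + 1)
        = (L : ℝ) * ∑ i ∈ Finset.range (g + 1), (2 * (2 + 3 / lam) * (1 + δ) ^ i + 1) :=
      sum_levels (fun i => 2 * (2 + 3 / lam) * (1 + δ) ^ i + 1) L hL0 (g + 1)
    have hgeom : ∑ i ∈ Finset.range (g + 1), ((1 + δ):ℝ) ^ i
        = ((1 + δ) ^ (g + 1) - 1) / δ := by
      rw [geom_sum_eq (ne_of_gt h1δ)]
      norm_num
    have hsplit : ∑ i ∈ Finset.range (g + 1), (2 * (2 + 3 / lam) * ((1 + δ):ℝ) ^ i + 1)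
        = 2 * (2 + 3 / lam) * (((1 + δ) ^ (g + 1) - 1) / δ) + (g + 1) := by
      rw [Finset.sum_add_distrib, ← Finset.mul_sum, hgeom, Finset.sum_const,
        Finset.card_range, nsmul_eq_mul, mul_one]
      push_cast
      ring
    -- bound the inner sum by E * (1+δ)^g
    have hinner : 2 * (2 + 3 / lam) * (((1 + δ) ^ (g + 1) - 1) / δ) + ((g:ℝ) + 1)
        ≤ E * (1 + δ) ^ g := by
      have hXpos : (0:ℝ) < (1 + δ) ^ g := by positivity
      have hb1 : 2 * (2 + 3 / lam) * (((1 + δ) ^ (g + 1) - 1) / δ)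
          ≤ 2 * (2 + 3 / lam) * (1 + δ) / δ * (1 + δ) ^ g := by
        have hkey : 2 * (2 + 3 / lam) * ((1 + δ) ^ (g + 1) - 1)
            ≤ 2 * (2 + 3 / lam) * (1 + δ) * (1 + δ) ^ g := by
          have hpow : ((1 + δ):ℝ) ^ (g + 1) = (1 + δ) * (1 + δ) ^ g := by ring
          rw [hpow]
          have h0 : (0:ℝ) ≤ 2 * (2 + 3 / lam) := by linarith
          nlinarith [h0]
        calc 2 * (2 + 3 / lam) * (((1 + δ) ^ (g + 1) - 1) / δ)
            = (2 * (2 + 3 / lam) * ((1 + δ) ^ (g + 1) - 1)) / δ := by ring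
          _ ≤ (2 * (2 + 3 / lam) * (1 + δ) * (1 + δ) ^ g) / δ := by gcongr
          _ = 2 * (2 + 3 / lam) * (1 + δ) / δ * (1 + δ) ^ g := by ring
      have hb2 : ((g:ℝ) + 1) ≤ (1 + 1 / δ) * (1 + δ) ^ g := by
        have hbern : 1 + (g:ℝ) * δ ≤ (1 + δ) ^ g := one_add_mul_le_pow (by linarith) g
        have h1δ' : (0:ℝ) < 1 / δ := one_div_pos.mpr hδ
        have hexp : (1 + 1 / δ) * (1 + (g:ℝ) * δ) = 1 + (g:ℝ) * δ + 1 / δ + g := by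
          field_simp
          ring
        have hg0 : (0:ℝ) ≤ (g:ℝ) * δ := by positivity
        have hstep : ((g:ℝ) + 1) ≤ (1 + 1 / δ) * (1 + (g:ℝ) * δ) := by
          rw [hexp]; linarith
        have h1d0 : (0:ℝ) ≤ 1 + 1 / δ := by linarith
        exact le_trans hstep (mul_le_mul_of_nonneg_left hbern h1d0)
      rw [hE]
      have hdist : (2 * (2 + 3 / lam) * (1 + δ) / δ + (1 + 1 / δ)) * (1 + δ) ^ g
          = 2 * (2 + 3 / lam) * (1 + δ) / δ * (1 + δ) ^ g + (1 + 1 / δ) * (1 + δ) ^ g := by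
        ring
      rw [hdist]
      exact add_le_add hb1 hb2
    -- assemble
    have hLreal : (L : ℝ) = 4 * (c : ℝ) := by exact_mod_cast hLdef
    have hcpos : (0:ℝ) < c := by exact_mod_cast hc1
    have hD1 : (1:ℝ) ≤ (degeneracy G : ℝ) + 1 := by
      have : (0:ℝ) ≤ (degeneracy G : ℝ) := by positivity
      linarith
    calc (∑ l ∈ Finset.univ.image ℓ, (⌈2 * (2 + 3 / lam) * (1 + δ) ^ (l / L)⌉₊ : ℝ))
        ≤ ∑ l ∈ Finset.range ((g + 1) * L), (⌈2 * (2 + 3 / lam) * (1 + δ) ^ (l / L)⌉₊ : ℝ) :=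
          hstep1
      _ ≤ ∑ l ∈ Finset.range ((g + 1) * L), (2 * (2 + 3 / lam) * (1 + δ) ^ (l / L) + 1) :=
          hstep2
      _ = (L : ℝ) * ∑ i ∈ Finset.range (g + 1), (2 * (2 + 3 / lam) * (1 + δ) ^ i + 1) :=
          hstep3
      _ = (L : ℝ) * (2 * (2 + 3 / lam) * (((1 + δ) ^ (g + 1) - 1) / δ) + ((g:ℝ) + 1)) := by
          rw [hsplit]
      _ ≤ (L : ℝ) * (E * (1 + δ) ^ g) := by
          apply mul_le_mul_of_nonneg_left hinner (by positivity)
      _ ≤ (L : ℝ) * (E * (B * ((degeneracy G : ℝ) + 1))) := by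
          apply mul_le_mul_of_nonneg_left _ (by positivity)
          exact mul_le_mul_of_nonneg_left hgb (le_of_lt hEpos)
      _ = 4 * E * B * ((degeneracy G : ℝ) + 1) * (c : ℝ) := by
          rw [hLreal]; ring
end
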